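/- In the two-agent coordination problem, the minimum total cost F over pairs of action sequences (σ^A, σ^B) equals the shortest-path cost Q(u*) in the joint state graph from the initial joint state to the goal joint state. -/
import Mathlib


open scoped Classical

variable {V : Type}

/-- A path from `a` to `b` given as a list of edges (vertex pairs). -/
def IsPath (adj : V → V → Prop) : V → V → List (V × V) → Prop
  | a, b, [] => a = b
  | a, b, e :: p => e.1 = a ∧ adj e.1 e.2 ∧ IsPath adj e.2 b p

/-- Cost of a path: sum of its edge costs. -/
noncomputable def pathCost (c : V → V → ℝ) (p : List (V × V)) : ℝ :=
  (p.map fun e => c e.1 e.2).sum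

/-- ψ a b : minimum cost to move from a to b on the base graph. -/
noncomputable def psi (adj : V → V → Prop) (c : V → V → ℝ) (a b : V) : ℝ :=
  sInf {x | ∃ p, IsPath adj a b p ∧ pathCost c p = x}

/-- The base graph is strongly connected. -/
def StronglyConnected (adj : V → V → Prop) : Prop :=
  ∀ a b : V, ∃ p, IsPath adj a b p

/-- JSG adjacency: each agent either stays at its node or moves along an edge. -/
def jsgAdj (adj : V → V → Prop) (s t : V × V) : Prop :=
  (t.1 = s.1 ∨ adj s.1 t.1) ∧ (t.2 = s.2 ∨ adj s.2 t.2)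

/-- Support-aware JSG edge cost (Algorithm 1): if one agent stays at a support
node of the risky edge the other traverses, the cost is
`min {c, c̄ + c_s}`; otherwise costs of individual moves are summed. -/
noncomputable def jsgCost (c cbar : V → V → ℝ) (cs : ℝ) (Z : V → V → Set V)
    (s t : V × V) : ℝ :=
  if s.1 = t.1 ∧ s.2 = t.2 then 0
  else if s.1 = t.1 then
    (if s.1 ∈ Z s.2 t.2 then min (c s.2 t.2) (cbar s.2 t.2 + cs) else c s.2 t.2)
  else if s.2 = t.2 then
    (if s.2 ∈ Z s.1 t.1 then min (c s.1 t.1) (cbar s.1 t.1 + cs) else c s.1 t.1)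
  else c s.1 t.1 + c s.2 t.2

/-- Cost Q(u) of a joint path u in the JSG. -/
noncomputable def Q (c cbar : V → V → ℝ) (cs : ℝ) (Z : V → V → Set V)
    (u : List ((V × V) × (V × V))) : ℝ :=
  (u.map fun e => jsgCost c cbar cs Z e.1 e.2).sum

/-- Shortest-path cost in the JSG between two joint states. -/
noncomputable def jsgDist (adj : V → V → Prop) (c cbar : V → V → ℝ) (cs : ℝ)
    (Z : V → V → Set V) (s t : V × V) : ℝ :=
  sInf {x | ∃ u, IsPath (jsgAdj adj) s t u ∧ Q c cbar cs Z u = x}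

/-- One time step of the two-agent system: positions before and after,
and the support flags (`supA` means A performs the support action). -/
structure Step (V : Type) where
  pA : V
  pB : V
  qA : V
  qB : V
  supA : Bool
  supB : Bool

/-- A step is valid when each agent stays or moves along an edge, and a
supporting agent stays in place. -/
def StepValid (adj : V → V → Prop) (st : Step V) : Prop :=
  (st.qA = st.pA ∨ adj st.pA st.qA) ∧ (st.qB = st.pB ∨ adj st.pB st.qB) ∧
  (st.supA = true → st.qA = st.pA) ∧ (st.supB = true → st.qB = st.pB)

/-- Per-step cost of agent A: `c_s` when supporting, `0` when staying,
`c̄` when moving supported by B from a support node, `c` otherwise. -/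
noncomputable def stepCostA (c cbar : V → V → ℝ) (cs : ℝ)
    (Z : V → V → Set V) (st : Step V) : ℝ :=
  if st.supA then cs
  else if st.qA = st.pA then 0
  else if st.supB = true ∧ st.pB ∈ Z st.pA st.qA then cbar st.pA st.qA
  else c st.pA st.qA

/-- Per-step cost of agent B, symmetric to `stepCostA`. -/
noncomputable def stepCostB (c cbar : V → V → ℝ) (cs : ℝ)
    (Z : V → V → Set V) (st : Step V) : ℝ :=
  if st.supB then cs
  else if st.qB = st.pB then 0
  else if st.supA = true ∧ st.pA ∈ Z st.pB st.qB then cbar st.pB st.qB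
  else c st.pB st.qB

/-- A valid trajectory of joint action sequences from positions `(a,b)`
to positions `(a',b')`. -/
def IsTraj (adj : V → V → Prop) : V → V → V → V → List (Step V) → Prop
  | a, b, a', b', [] => a = a' ∧ b = b'
  | a, b, a', b', st :: rest =>
      st.pA = a ∧ st.pB = b ∧ StepValid adj st ∧
        IsTraj adj st.qA st.qB a' b' rest

/-- Total cost F of a pair of action sequences: the sum over all steps of
both agents' costs. -/
noncomputable def F (c cbar : V → V → ℝ) (cs : ℝ) (Z : V → V → Set V)
    (σ : List (Step V)) : ℝ :=
  (σ.map fun st => stepCostA c cbar cs Z st + stepCostB c cbar cs Z st).sum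

section Aux

variable (adj : V → V → Prop) (c cbar : V → V → ℝ) (cs : ℝ) (Z : V → V → Set V)

lemma jsgCost_nonneg (hc : ∀ i j, 0 ≤ c i j) (hcbar : ∀ i j, 0 ≤ cbar i j)
    (hcs : 0 ≤ cs) (s t : V × V) : 0 ≤ jsgCost c cbar cs Z s t := by
  unfold jsgCost
  split_ifs
  · exact le_refl 0
  · exact le_min (hc _ _) (add_nonneg (hcbar _ _) hcs)
  · exact hc _ _
  · exact le_min (hc _ _) (add_nonneg (hcbar _ _) hcs)
  · exact hc _ _
  · exact add_nonneg (hc _ _) (hc _ _)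

lemma stepCostA_nonneg (hc : ∀ i j, 0 ≤ c i j) (hcbar : ∀ i j, 0 ≤ cbar i j)
    (hcs : 0 ≤ cs) (st : Step V) : 0 ≤ stepCostA c cbar cs Z st := by
  unfold stepCostA; split_ifs
  · exact hcs
  · exact le_refl 0
  · exact hcbar _ _
  · exact hc _ _

lemma stepCostB_nonneg (hc : ∀ i j, 0 ≤ c i j) (hcbar : ∀ i j, 0 ≤ cbar i j)
    (hcs : 0 ≤ cs) (st : Step V) : 0 ≤ stepCostB c cbar cs Z st := by
  unfold stepCostB; split_ifs
  · exact hcs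
  · exact le_refl 0
  · exact hcbar _ _
  · exact hc _ _

lemma Q_nonneg (hc : ∀ i j, 0 ≤ c i j) (hcbar : ∀ i j, 0 ≤ cbar i j)
    (hcs : 0 ≤ cs) (u : List ((V × V) × (V × V))) : 0 ≤ Q c cbar cs Z u := by
  refine List.sum_nonneg ?_
  intro x hx
  simp only [List.mem_map] at hx
  obtain ⟨e, -, rfl⟩ := hx
  exact jsgCost_nonneg c cbar cs Z hc hcbar hcs _ _

lemma F_nonneg (hc : ∀ i j, 0 ≤ c i j) (hcbar : ∀ i j, 0 ≤ cbar i j)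
    (hcs : 0 ≤ cs) (σ : List (Step V)) : 0 ≤ F c cbar cs Z σ := by
  refine List.sum_nonneg ?_
  intro x hx
  simp only [List.mem_map] at hx
  obtain ⟨st, -, rfl⟩ := hx
  exact add_nonneg (stepCostA_nonneg c cbar cs Z hc hcbar hcs st)
    (stepCostB_nonneg c cbar cs Z hc hcbar hcs st)

lemma isPath_append {adj : V → V → Prop} :
    ∀ {p : List (V × V)} {q : List (V × V)} {a b d : V},
      IsPath adj a b p → IsPath adj b d q → IsPath adj a d (p ++ q)
  | [], q, a, b, d, h, h2 => by
      simp only [IsPath] at h; subst h; simpa using h2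
  | e :: p, q, a, b, d, h, h2 => ⟨h.1, h.2.1, isPath_append h.2.2 h2⟩

lemma isPath_liftA {adj : V → V → Prop} :
    ∀ {p : List (V × V)} {a b : V} (x : V), IsPath adj a b p →
      IsPath (jsgAdj adj) (a, x) (b, x)
        (p.map fun e => ((e.1, x), (e.2, x)))
  | [], a, b, x, h => by
      simp only [IsPath] at h; subst h; simp [IsPath]
  | e :: p, a, b, x, h => by
      exact ⟨by simp [h.1], ⟨Or.inr h.2.1, Or.inl rfl⟩, isPath_liftA x h.2.2⟩

lemma isPath_liftB {adj : V → V → Prop} :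
    ∀ {p : List (V × V)} {a b : V} (x : V), IsPath adj a b p →
      IsPath (jsgAdj adj) (x, a) (x, b)
        (p.map fun e => ((x, e.1), (x, e.2)))
  | [], a, b, x, h => by
      simp only [IsPath] at h; subst h; simp [IsPath]
  | e :: p, a, b, x, h => by
      exact ⟨by simp [h.1], ⟨Or.inl rfl, Or.inr h.2.1⟩, isPath_liftB x h.2.2⟩

lemma jsgCost_ss {a b a' b' : V} (h1 : a = a') (h2 : b = b') :
    jsgCost c cbar cs Z (a, b) (a', b') = 0 := by
  unfold jsgCost; dsimp only; rw [if_pos ⟨h1, h2⟩]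

lemma jsgCost_sm {a b a' b' : V} (h1 : a = a') (h2 : ¬ b = b') :
    jsgCost c cbar cs Z (a, b) (a', b') =
      if a ∈ Z b b' then min (c b b') (cbar b b' + cs) else c b b' := by
  unfold jsgCost; dsimp only; rw [if_neg (by tauto), if_pos h1]

lemma jsgCost_ms {a b a' b' : V} (h1 : ¬ a = a') (h2 : b = b') :
    jsgCost c cbar cs Z (a, b) (a', b') =
      if b ∈ Z a a' then min (c a a') (cbar a a' + cs) else c a a' := by
  unfold jsgCost; dsimp only; rw [if_neg (by tauto), if_neg h1, if_pos h2]

lemma jsgCost_mm {a b a' b' : V} (h1 : ¬ a = a') (h2 : ¬ b = b') :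
    jsgCost c cbar cs Z (a, b) (a', b') = c a a' + c b b' := by
  unfold jsgCost; dsimp only; rw [if_neg (by tauto), if_neg h1, if_neg h2]

lemma stepCostA_sup {st : Step V} (h : st.supA = true) :
    stepCostA c cbar cs Z st = cs := by
  unfold stepCostA; rw [if_pos h]

lemma stepCostA_stay {st : Step V} (h : st.supA = false) (h2 : st.qA = st.pA) :
    stepCostA c cbar cs Z st = 0 := by
  unfold stepCostA; rw [if_neg (by simp [h]), if_pos h2]

lemma stepCostA_move {st : Step V} (h : st.supA = false) (h2 : ¬ st.qA = st.pA) :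
    stepCostA c cbar cs Z st =
      if st.supB = true ∧ st.pB ∈ Z st.pA st.qA then cbar st.pA st.qA
      else c st.pA st.qA := by
  unfold stepCostA; rw [if_neg (by simp [h]), if_neg h2]

lemma stepCostB_sup {st : Step V} (h : st.supB = true) :
    stepCostB c cbar cs Z st = cs := by
  unfold stepCostB; rw [if_pos h]

lemma stepCostB_stay {st : Step V} (h : st.supB = false) (h2 : st.qB = st.pB) :
    stepCostB c cbar cs Z st = 0 := by
  unfold stepCostB; rw [if_neg (by simp [h]), if_pos h2]

lemma stepCostB_move {st : Step V} (h : st.supB = false) (h2 : ¬ st.qB = st.pB) :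
    stepCostB c cbar cs Z st =
      if st.supA = true ∧ st.pA ∈ Z st.pB st.qB then cbar st.pB st.qB
      else c st.pB st.qB := by
  unfold stepCostB; rw [if_neg (by simp [h]), if_neg h2]

/-- Key per-step bound: the JSG edge cost is at most the total step cost. -/
lemma jsgCost_le_stepCost (hc : ∀ i j, 0 ≤ c i j) (hcbar : ∀ i j, 0 ≤ cbar i j)
    (hcs : 0 ≤ cs) {adj : V → V → Prop} (st : Step V)
    (hv : StepValid adj st) :
    jsgCost c cbar cs Z (st.pA, st.pB) (st.qA, st.qB) ≤
      stepCostA c cbar cs Z st + stepCostB c cbar cs Z st := by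
  obtain ⟨-, -, hA, hB⟩ := hv
  by_cases h1 : st.pA = st.qA <;> by_cases h2 : st.pB = st.qB
  · rw [jsgCost_ss c cbar cs Z h1 h2]
    exact add_nonneg (stepCostA_nonneg c cbar cs Z hc hcbar hcs st)
      (stepCostB_nonneg c cbar cs Z hc hcbar hcs st)
  · -- A stays, B moves
    have hsB : st.supB = false := by
      cases hxB : st.supB
      · rfl
      · exact absurd (hB hxB).symm h2
    rw [jsgCost_sm c cbar cs Z h1 h2,
      stepCostB_move c cbar cs Z hsB (fun hh => h2 hh.symm)]
    cases hxA : st.supA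
    · rw [stepCostA_stay c cbar cs Z hxA h1.symm]
      simp only [Bool.false_eq_true, false_and, if_false]
      split_ifs with hz
      · linarith [min_le_left (c st.pB st.qB) (cbar st.pB st.qB + cs)]
      · linarith
    · rw [stepCostA_sup c cbar cs Z hxA]
      simp only [eq_self_iff_true, true_and]
      split_ifs with hz
      · linarith [min_le_right (c st.pB st.qB) (cbar st.pB st.qB + cs)]
      · linarith [hcs]
  · -- B stays, A moves
    have hsA : st.supA = false := by
      cases hxA : st.supA
      · rfl
      · exact absurd (hA hxA).symm h1
    rw [jsgCost_ms c cbar cs Z h1 h2,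
      stepCostA_move c cbar cs Z hsA (fun hh => h1 hh.symm)]
    cases hxB : st.supB
    · rw [stepCostB_stay c cbar cs Z hxB h2.symm]
      simp only [Bool.false_eq_true, false_and, if_false]
      split_ifs with hz
      · linarith [min_le_left (c st.pA st.qA) (cbar st.pA st.qA + cs)]
      · linarith
    · rw [stepCostB_sup c cbar cs Z hxB]
      simp only [eq_self_iff_true, true_and]
      split_ifs with hz
      · linarith [min_le_right (c st.pA st.qA) (cbar st.pA st.qA + cs)]
      · linarith [hcs]
  · -- both move
    have hsA : st.supA = false := by
      cases hxA : st.supA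
      · rfl
      · exact absurd (hA hxA).symm h1
    have hsB : st.supB = false := by
      cases hxB : st.supB
      · rfl
      · exact absurd (hB hxB).symm h2
    rw [jsgCost_mm c cbar cs Z h1 h2,
      stepCostA_move c cbar cs Z hsA (fun hh => h1 hh.symm),
      stepCostB_move c cbar cs Z hsB (fun hh => h2 hh.symm), hsA, hsB]
    simp only [Bool.false_eq_true, false_and, if_false]
    exact le_rfl

/-- Direction 1: every trajectory dominates some joint path. -/
lemma traj_to_path (hc : ∀ i j, 0 ≤ c i j) (hcbar : ∀ i j, 0 ≤ cbar i j)
    (hcs : 0 ≤ cs) {adj : V → V → Prop} :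
    ∀ {σ : List (Step V)} {a b a' b' : V}, IsTraj adj a b a' b' σ →
      ∃ u, IsPath (jsgAdj adj) (a, b) (a', b') u ∧
        Q c cbar cs Z u ≤ F c cbar cs Z σ := by
  intro σ
  induction σ with
  | nil =>
      intro a b a' b' h
      obtain ⟨rfl, rfl⟩ := h
      exact ⟨[], rfl, le_refl 0⟩
  | cons st rest ih =>
      intro a b a' b' h
      obtain ⟨hpA, hpB, hv, htraj⟩ := h
      obtain ⟨u, hu, hle⟩ := ih htraj
      refine ⟨((a, b), (st.qA, st.qB)) :: u, ⟨rfl, ?_, hu⟩, ?_⟩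
      · exact ⟨by rw [← hpA]; exact hv.1, by rw [← hpB]; exact hv.2.1⟩
      · have key := jsgCost_le_stepCost c cbar cs Z hc hcbar hcs st hv
        rw [hpA, hpB] at key
        simp only [Q, F, List.map_cons, List.sum_cons]
        have h2 := hle
        simp only [Q, F] at h2
        linarith

/-- Key per-edge construction: every JSG edge is realized by a step of no
greater cost. -/
lemma step_of_jsgEdge {adj : V → V → Prop} {s t : V × V}
    (h : jsgAdj adj s t) :
    ∃ st : Step V, st.pA = s.1 ∧ st.pB = s.2 ∧ st.qA = t.1 ∧ st.qB = t.2 ∧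
      StepValid adj st ∧
      stepCostA c cbar cs Z st + stepCostB c cbar cs Z st ≤
        jsgCost c cbar cs Z s t := by
  obtain ⟨s1, s2⟩ := s
  obtain ⟨t1, t2⟩ := t
  obtain ⟨hA, hB⟩ := h
  dsimp only at hA hB ⊢
  by_cases h1 : s1 = t1 <;> by_cases h2 : s2 = t2
  · -- both stay
    refine ⟨⟨s1, s2, t1, t2, false, false⟩, rfl, rfl, rfl, rfl,
      ⟨hA, hB, by simp, by simp⟩, ?_⟩
    rw [jsgCost_ss c cbar cs Z h1 h2,
      stepCostA_stay c cbar cs Z rfl h1.symm,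
      stepCostB_stay c cbar cs Z rfl h2.symm]
    norm_num
  · -- A stays, B moves
    by_cases hz : s1 ∈ Z s2 t2 ∧ cbar s2 t2 + cs ≤ c s2 t2
    · refine ⟨⟨s1, s2, t1, t2, true, false⟩, rfl, rfl, rfl, rfl,
        ⟨hA, hB, fun _ => h1.symm, by simp⟩, ?_⟩
      rw [jsgCost_sm c cbar cs Z h1 h2,
        stepCostA_sup c cbar cs Z rfl,
        stepCostB_move c cbar cs Z rfl (fun hh => h2 hh.symm)]
      dsimp only
      rw [if_pos ⟨rfl, hz.1⟩, if_pos hz.1, min_eq_right hz.2]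
      linarith
    · refine ⟨⟨s1, s2, t1, t2, false, false⟩, rfl, rfl, rfl, rfl,
        ⟨hA, hB, by simp, by simp⟩, ?_⟩
      rw [jsgCost_sm c cbar cs Z h1 h2,
        stepCostA_stay c cbar cs Z rfl h1.symm,
        stepCostB_move c cbar cs Z rfl (fun hh => h2 hh.symm)]
      dsimp only
      rw [if_neg (by simp)]
      by_cases hz1 : s1 ∈ Z s2 t2
      · have hle : ¬ cbar s2 t2 + cs ≤ c s2 t2 := fun hh => hz ⟨hz1, hh⟩
        rw [if_pos hz1, min_eq_left (le_of_not_ge hle)]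
        linarith
      · rw [if_neg hz1]
        linarith
  · -- B stays, A moves
    by_cases hz : s2 ∈ Z s1 t1 ∧ cbar s1 t1 + cs ≤ c s1 t1
    · refine ⟨⟨s1, s2, t1, t2, false, true⟩, rfl, rfl, rfl, rfl,
        ⟨hA, hB, by simp, fun _ => h2.symm⟩, ?_⟩
      rw [jsgCost_ms c cbar cs Z h1 h2,
        stepCostB_sup c cbar cs Z rfl,
        stepCostA_move c cbar cs Z rfl (fun hh => h1 hh.symm)]
      dsimp only
      rw [if_pos ⟨rfl, hz.1⟩, if_pos hz.1, min_eq_right hz.2]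
    · refine ⟨⟨s1, s2, t1, t2, false, false⟩, rfl, rfl, rfl, rfl,
        ⟨hA, hB, by simp, by simp⟩, ?_⟩
      rw [jsgCost_ms c cbar cs Z h1 h2,
        stepCostB_stay c cbar cs Z rfl h2.symm,
        stepCostA_move c cbar cs Z rfl (fun hh => h1 hh.symm)]
      dsimp only
      rw [if_neg (by simp)]
      by_cases hz1 : s2 ∈ Z s1 t1
      · have hle : ¬ cbar s1 t1 + cs ≤ c s1 t1 := fun hh => hz ⟨hz1, hh⟩
        rw [if_pos hz1, min_eq_left (le_of_not_ge hle)]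
        linarith
      · rw [if_neg hz1]
        linarith
  · -- both move
    refine ⟨⟨s1, s2, t1, t2, false, false⟩, rfl, rfl, rfl, rfl,
      ⟨hA, hB, by simp, by simp⟩, ?_⟩
    rw [jsgCost_mm c cbar cs Z h1 h2,
      stepCostA_move c cbar cs Z rfl (fun hh => h1 hh.symm),
      stepCostB_move c cbar cs Z rfl (fun hh => h2 hh.symm)]
    dsimp only
    rw [if_neg (by simp), if_neg (by simp)]

/-- Direction 2: every joint path is realized by a trajectory. -/
lemma path_to_traj {adj : V → V → Prop} :
    ∀ {u : List ((V × V) × (V × V))} {s t : V × V},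
      IsPath (jsgAdj adj) s t u →
      ∃ σ, IsTraj adj s.1 s.2 t.1 t.2 σ ∧
        F c cbar cs Z σ ≤ Q c cbar cs Z u := by
  intro u
  induction u with
  | nil =>
      intro s t h
      exact ⟨[], by simp [IsTraj, Prod.ext_iff.mp h], le_refl 0⟩
  | cons e u ih =>
      intro s t h
      obtain ⟨he, hadj, hpath⟩ := h
      obtain ⟨σ, hσ, hle⟩ := ih hpath
      obtain ⟨st, h1, h2, h3, h4, hv, hcost⟩ :=
        step_of_jsgEdge c cbar cs Z (adj := adj) hadj
      refine ⟨st :: σ, ⟨by rw [h1, he], by rw [h2, he], hv, ?_⟩, ?_⟩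
      · rw [h3, h4]; exact hσ
      · simp only [Q, F, List.map_cons, List.sum_cons]
        simp only [Q, F] at hle
        linarith

end Aux

/-- The minimum total cost F over pairs of action sequences equals the
shortest-path cost Q(u*) in the JSG from the initial joint state to the
goal joint state. -/
theorem min_F_eq_Qstar (adj : V → V → Prop) (c cbar : V → V → ℝ) (cs : ℝ)
    (Z : V → V → Set V) (vstart vgoal : V)
    (hconn : StronglyConnected adj) (hc : ∀ i j, 0 ≤ c i j)
    (hcbar : ∀ i j, 0 ≤ cbar i j) (hcs : 0 ≤ cs) :
    sInf {x | ∃ σ, IsTraj adj vstart vstart vgoal vgoal σ ∧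
        F c cbar cs Z σ = x} =
      jsgDist adj c cbar cs Z (vstart, vstart) (vgoal, vgoal) := by
  unfold jsgDist
  set S := {x | ∃ σ, IsTraj adj vstart vstart vgoal vgoal σ ∧
      F c cbar cs Z σ = x} with hS
  set T := {x | ∃ u, IsPath (jsgAdj adj) (vstart, vstart) (vgoal, vgoal) u ∧
      Q c cbar cs Z u = x} with hT
  -- nonemptiness of T
  obtain ⟨p, hp⟩ := hconn vstart vgoal
  have hTpath : ∃ u, IsPath (jsgAdj adj) (vstart, vstart) (vgoal, vgoal) u := by
    refine ⟨(p.map fun e => ((e.1, vstart), (e.2, vstart))) ++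
      (p.map fun e => ((vgoal, e.1), (vgoal, e.2))), ?_⟩
    exact isPath_append (isPath_liftA vstart hp) (isPath_liftB vgoal hp)
  obtain ⟨u0, hu0⟩ := hTpath
  have hTne : T.Nonempty := ⟨Q c cbar cs Z u0, u0, hu0, rfl⟩
  obtain ⟨σ0, hσ0, -⟩ := path_to_traj c cbar cs Z (adj := adj) hu0
  have hSne : S.Nonempty := ⟨F c cbar cs Z σ0, σ0, hσ0, rfl⟩
  have hSbd : BddBelow S := by
    refine ⟨0, ?_⟩
    rintro x ⟨σ, -, rfl⟩
    exact F_nonneg c cbar cs Z hc hcbar hcs σ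
  have hTbd : BddBelow T := by
    refine ⟨0, ?_⟩
    rintro x ⟨u, -, rfl⟩
    exact Q_nonneg c cbar cs Z hc hcbar hcs u
  apply le_antisymm
  · refine le_csInf hTne ?_
    rintro y ⟨u, hu, rfl⟩
    obtain ⟨σ, hσ, hle⟩ := path_to_traj c cbar cs Z (adj := adj) hu
    exact le_trans (csInf_le hSbd ⟨σ, hσ, rfl⟩) hle
  · refine le_csInf hSne ?_
    rintro y ⟨σ, hσ, rfl⟩
    obtain ⟨u, hu, hle⟩ := traj_to_path c cbar cs Z hc hcbar hcs hσ
    exact le_trans (csInf_le hTbd ⟨u, hu, rfl⟩) hle
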